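/- arXiv:0905.1383 — 2 statements merged into one kernel-verified Lean document; each statement's English description precedes it below -/
import Mathlib

section
/- Let I be a finite-dimensional Z/2-graded ideal of a Lie superalgebra g over an algebraically closed field, and let M be a simple g-module with representation ρ. If ρ(x) is a nilpotent endomorphism of M for every x ∈ I, then I·M = 0. -/
/-!
The even part `R = ρ(I₀)` and the odd part `V = ρ(I₁)` of `ρ(I)` satisfy `[R, R] ⊆ R`,
`[R, V] ⊆ V` and `{V, V} ⊆ R`, and `R` consists of nilpotent endomorphisms. By Engel's theorem
`ad R` acts nilpotently, which yields a filtration `V = D₀ ⊇ D₁ ⊇ ⋯ ⊇ Dₙ = 0` with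
`[R, Dⱼ] ⊆ Dⱼ₊₁`. Descending along it: `Dⱼ` preserves the joint kernel of `R` and `Dⱼ₊₁`, and
its elements anticommute and square to zero there, so they have a common nonzero kernel vector
in it. Hence the joint kernel of `ρ(I)` is nonzero; it is a submodule because `I` is an ideal,
and graded because `I` is graded, so by simplicity it is all of `M`.
-/

section JointKernel

variable {R M : Type*} [CommSemiring R] [AddCommMonoid M] [Module R M]

def jointKer (S : Submodule R (Module.End R M)) : Submodule R M :=
  ⨅ f ∈ S, LinearMap.ker f

lemma mem_jointKer {S : Submodule R (Module.End R M)} {m : M} :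
    m ∈ jointKer S ↔ ∀ f ∈ S, f m = 0 := by
  simp [jointKer]

lemma jointKer_antitone : Antitone (jointKer (R := R) (M := M)) :=
  fun _ _ hST _ hm ↦ mem_jointKer.2 fun f hf ↦ mem_jointKer.1 hm f (hST hf)

lemma jointKer_sup (S T : Submodule R (Module.End R M)) :
    jointKer (S ⊔ T) = jointKer S ⊓ jointKer T := by
  refine le_antisymm (le_inf (jointKer_antitone le_sup_left) (jointKer_antitone le_sup_right)) ?_
  rintro m ⟨hS, hT⟩
  refine mem_jointKer.2 fun f hf ↦ ?_
  obtain ⟨s, hs, t, ht, rfl⟩ := Submodule.mem_sup.1 hf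
  rw [LinearMap.add_apply, mem_jointKer.1 hS s hs, mem_jointKer.1 hT t ht, add_zero]

lemma mem_jointKer_map {L : Type*} [AddCommMonoid L] [Module R L] (ρ : L →ₗ[R] Module.End R M)
    (p : Submodule R L) {m : M} : m ∈ jointKer (p.map ρ) ↔ ∀ x ∈ p, ρ x m = 0 := by
  simp [mem_jointKer]

lemma mem_jointKer_span {s : Set (Module.End R M)} {m : M} :
    m ∈ jointKer (Submodule.span R s) ↔ ∀ f ∈ s, f m = 0 := by
  refine ⟨fun h f hf ↦ mem_jointKer.1 h f (Submodule.subset_span hf), fun h ↦ ?_⟩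
  have : Submodule.span R s ≤ LinearMap.ker (LinearMap.applyₗ m) := Submodule.span_le.2 h
  exact mem_jointKer.2 fun f hf ↦ this hf

end JointKernel

section Anticommuting

variable {F M : Type*} [Field F] [AddCommGroup M] [Module F M]

lemma exists_ne_zero_forall_apply_eq_zero_of_anticommute (h2 : (2 : F) ≠ 0)
    {W : Submodule F M} (hW : W ≠ ⊥) (s : Finset (Module.End F M))
    (hsW : ∀ u ∈ s, ∀ w ∈ W, u w ∈ W)
    (hanti : ∀ u ∈ s, ∀ v ∈ s, ∀ w ∈ W, u (v w) + v (u w) = 0) :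
    ∃ w ∈ W, w ≠ 0 ∧ ∀ u ∈ s, u w = 0 := by
  classical
  induction s using Finset.induction_on with
  | empty => simpa using (Submodule.ne_bot_iff W).1 hW
  | insert a s _ ih =>
    simp only [Finset.mem_insert, forall_eq_or_imp] at hsW hanti ⊢
    obtain ⟨w, hwW, hw0, hsw⟩ := ih hsW.2 fun u hu ↦ (hanti.2 u hu).2
    by_cases haw : a w = 0
    · exact ⟨w, hwW, hw0, haw, hsw⟩
    -- otherwise `a w` works: `a` squares to zero on `W` and anticommutes with `s` there
    refine ⟨a w, hsW.1 w hwW, haw, ?_, fun u hu ↦ ?_⟩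
    · have h := hanti.1.1 w hwW
      rw [← two_smul F] at h
      exact (smul_eq_zero.1 h).resolve_left h2
    · have h := (hanti.2 u hu).1 w hwW
      rwa [hsw u hu, map_zero, add_zero] at h

lemma inf_jointKer_ne_bot_of_anticommute (h2 : (2 : F) ≠ 0) {W : Submodule F M} (hW : W ≠ ⊥)
    (U : Submodule F (Module.End F M)) [FiniteDimensional F U]
    (hUW : ∀ u ∈ U, ∀ w ∈ W, u w ∈ W)
    (hanti : ∀ u ∈ U, ∀ v ∈ U, ∀ w ∈ W, u (v w) + v (u w) = 0) :
    W ⊓ jointKer U ≠ ⊥ := by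
  obtain ⟨s, rfl⟩ := (Submodule.fg_iff_finiteDimensional U).2 ‹_›
  have hs : ∀ u ∈ s, u ∈ Submodule.span F (s : Set (Module.End F M)) :=
    fun u hu ↦ Submodule.subset_span hu
  obtain ⟨w, hwW, hw0, hsw⟩ := exists_ne_zero_forall_apply_eq_zero_of_anticommute h2 hW s
    (fun u hu ↦ hUW u (hs u hu)) fun u hu v hv ↦ hanti u (hs u hu) v (hs v hv)
  exact (Submodule.ne_bot_iff _).2 ⟨w, ⟨hwW, mem_jointKer_span.2 hsw⟩, hw0⟩

lemma jointKer_sup_ne_bot_of_le_of_anticommute (h2 : (2 : F) ≠ 0)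
    {R V D D' : Submodule F (Module.End F M)} [FiniteDimensional F D] (hD : D ≤ V) (hD' : D' ≤ V)
    (hRD : ∀ r ∈ R, ∀ v ∈ D, r * v - v * r ∈ D') (hVV : ∀ u ∈ V, ∀ v ∈ V, u * v + v * u ∈ R)
    (h : jointKer (R ⊔ D') ≠ ⊥) : jointKer (R ⊔ D) ≠ ⊥ := by
  have hanti : ∀ u ∈ V, ∀ v ∈ V, ∀ w ∈ jointKer (R ⊔ D'), u (v w) + v (u w) = 0 := by
    intro u hu v hv w hw
    rw [jointKer_sup] at hw
    exact mem_jointKer.1 hw.1 _ (hVV u hu v hv)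
  have hDW : ∀ v ∈ D, ∀ w ∈ jointKer (R ⊔ D'), v w ∈ jointKer (R ⊔ D') := by
    intro v hv w hw
    have hw' := hw
    rw [jointKer_sup] at hw' ⊢
    refine ⟨mem_jointKer.2 fun r hr ↦ ?_, mem_jointKer.2 fun u hu ↦ ?_⟩
    · have h := mem_jointKer.1 hw'.2 _ (hRD r hr v hv)
      rwa [LinearMap.sub_apply, Module.End.mul_apply, Module.End.mul_apply,
        mem_jointKer.1 hw'.1 r hr, map_zero, sub_zero] at h
    · have h := hanti u (hD' hu) v (hD hv) w hw
      rwa [mem_jointKer.1 hw'.2 u hu, map_zero, add_zero] at h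
  refine ne_bot_of_le_ne_bot (inf_jointKer_ne_bot_of_anticommute h2 h D hDW
    fun u hu v hv ↦ hanti u (hD hu) v (hD hv)) ?_
  rw [← jointKer_sup]
  exact jointKer_antitone (sup_le_sup_right le_sup_left _)

end Anticommuting

section Engel

attribute [local instance 100] LieRing.ofAssociativeRing

variable {F M : Type*} [Field F] [AddCommGroup M] [Module F M]

def Submodule.toLieSubalgebraOfCommutatorMem (S : Submodule F (Module.End F M))
    (hS : ∀ a ∈ S, ∀ b ∈ S, a * b - b * a ∈ S) : LieSubalgebra F (Module.End F M) :=
  { S with lie_mem' := fun ha hb ↦ hS _ ha _ hb }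

lemma Submodule.isNilpotent_toLieSubalgebraOfCommutatorMem (S : Submodule F (Module.End F M))
    [FiniteDimensional F S] (hS : ∀ a ∈ S, ∀ b ∈ S, a * b - b * a ∈ S)
    (hnil : ∀ a ∈ S, IsNilpotent a) :
    LieModule.IsNilpotent (S.toLieSubalgebraOfCommutatorMem hS) M :=
  have : FiniteDimensional F (S.toLieSubalgebraOfCommutatorMem hS) := ‹FiniteDimensional F S›
  LieAlgebra.isEngelian_of_isNoetherian M fun x ↦ hnil x x.2

lemma Submodule.jointKer_ne_bot_of_isNilpotent [Nontrivial M] (S : Submodule F (Module.End F M))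
    [FiniteDimensional F S] (hS : ∀ a ∈ S, ∀ b ∈ S, a * b - b * a ∈ S)
    (hnil : ∀ a ∈ S, IsNilpotent a) : jointKer S ≠ ⊥ := by
  let E := S.toLieSubalgebraOfCommutatorMem hS
  have := S.isNilpotent_toLieSubalgebraOfCommutatorMem hS hnil
  have := LieModule.nontrivial_max_triv_of_isNilpotent F E M
  obtain ⟨⟨m, hm⟩, hm0⟩ := exists_ne (0 : LieModule.maxTrivSubmodule F E M)
  refine (Submodule.ne_bot_iff _).2 ⟨m, mem_jointKer.2 fun f hf ↦ ?_, fun h ↦ hm0 (by simp [h])⟩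
  exact (LieModule.mem_maxTrivSubmodule _ _ _ _).1 hm ⟨f, hf⟩

lemma Submodule.exists_chain_of_isNilpotent (S : Submodule F (Module.End F M))
    [FiniteDimensional F S] (hS : ∀ a ∈ S, ∀ b ∈ S, a * b - b * a ∈ S)
    (hnil : ∀ a ∈ S, IsNilpotent a) :
    ∃ C : ℕ → Submodule F M, C 0 = ⊤ ∧ (∃ n, C n = ⊥) ∧
      ∀ j, ∀ a ∈ S, ∀ m ∈ C j, a m ∈ C (j + 1) := by
  let E := S.toLieSubalgebraOfCommutatorMem hS
  have := S.isNilpotent_toLieSubalgebraOfCommutatorMem hS hnil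
  refine ⟨fun j ↦ LieModule.lowerCentralSeries F E M j, by simp, ?_, fun j a ha m hm ↦ ?_⟩
  · obtain ⟨n, hn⟩ := LieModule.IsNilpotent.nilpotent F E M
    exact ⟨n, by simp [hn]⟩
  · have : ⁅(⟨a, ha⟩ : E), m⁆ ∈ LieModule.lowerCentralSeries F E M (j + 1) := by
      rw [LieModule.lowerCentralSeries_succ]
      exact LieSubmodule.lie_mem_lie (LieSubmodule.mem_top _) hm
    exact this

theorem jointKer_sup_ne_bot_of_superCommutator_mem (h2 : (2 : F) ≠ 0) [Nontrivial M]
    (R V : Submodule F (Module.End F M)) [FiniteDimensional F R] [FiniteDimensional F V]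
    (hRR : ∀ a ∈ R, ∀ b ∈ R, a * b - b * a ∈ R) (hRV : ∀ a ∈ R, ∀ b ∈ V, a * b - b * a ∈ V)
    (hVV : ∀ a ∈ V, ∀ b ∈ V, a * b + b * a ∈ R) (hnil : ∀ a ∈ R, IsNilpotent a) :
    jointKer (R ⊔ V) ≠ ⊥ := by
  let adR := R.map (LieAlgebra.ad F (Module.End F M)).toLinearMap
  have hadR : ∀ A ∈ adR, ∀ B ∈ adR, A * B - B * A ∈ adR := by
    rintro _ ⟨a, ha, rfl⟩ _ ⟨b, hb, rfl⟩
    exact ⟨a * b - b * a, hRR a ha b hb, LieHom.map_lie _ a b⟩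
  have hadR_nil : ∀ A ∈ adR, IsNilpotent A := by
    rintro _ ⟨a, ha, rfl⟩
    exact LieAlgebra.ad_nilpotent_of_nilpotent (hnil a ha)
  obtain ⟨C, hC0, ⟨n, hCn⟩, hC⟩ := adR.exists_chain_of_isNilpotent hadR hadR_nil
  have hstep (j : ℕ) : jointKer (R ⊔ (V ⊓ C (j + 1))) ≠ ⊥ → jointKer (R ⊔ (V ⊓ C j)) ≠ ⊥ :=
    have := Submodule.finiteDimensional_of_le (inf_le_left : V ⊓ C j ≤ V)
    jointKer_sup_ne_bot_of_le_of_anticommute h2 inf_le_left inf_le_left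
      (fun r hr v hv ↦ ⟨hRV r hr v hv.1, hC j _ ⟨r, hr, rfl⟩ v hv.2⟩) hVV
  have hbase : jointKer (R ⊔ (V ⊓ C n)) ≠ ⊥ := by
    simpa [hCn] using R.jointKer_ne_bot_of_isNilpotent hRR hnil
  simpa [hC0] using Nat.decreasingInduction (motive := fun j _ ↦ jointKer (R ⊔ (V ⊓ C j)) ≠ ⊥)
    (fun j _ ↦ hstep j) hbase (Nat.zero_le n)

end Engel

lemma DirectSum.IsInternal.sup_eq_top_of_zmod_two {R N : Type*} [Semiring R] [AddCommMonoid N]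
    [Module R N] {A : ZMod 2 → Submodule R N} (hA : DirectSum.IsInternal A) : A 0 ⊔ A 1 = ⊤ :=
  (hA.isCompl zero_ne_one (Set.ext (by decide))).sup_eq_top

section GradedIdeal

variable {F g M : Type*} [Field F] [AddCommGroup g] [Module F g] [AddCommGroup M] [Module F M]
  {bra : g →ₗ[F] g →ₗ[F] g} {ggr : ZMod 2 → Submodule F g} {I : Submodule F g}
  {Mgr : ZMod 2 → Submodule F M} {ρ : g →ₗ[F] Module.End F M}

lemma mem_jointKer_map_iff_of_homogeneous (hI : I = (I ⊓ ggr 0) ⊔ (I ⊓ ggr 1)) {m : M} :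
    m ∈ jointKer (I.map ρ) ↔ ∀ i, ∀ x ∈ I ⊓ ggr i, ρ x m = 0 := by
  refine ⟨fun h i x hx ↦ (mem_jointKer_map ρ I).1 h x hx.1, fun h ↦ ?_⟩
  rw [hI, Submodule.map_sup, jointKer_sup]
  exact ⟨(mem_jointKer_map ρ _).2 (h 0), (mem_jointKer_map ρ _).2 (h 1)⟩

lemma superCommutator_mem_map
    (hbgr : ∀ i j : ZMod 2, ∀ x ∈ ggr i, ∀ y ∈ ggr j, bra x y ∈ ggr (i + j))
    (hIdeal : ∀ x : g, ∀ y ∈ I, bra x y ∈ I)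
    (hρbra : ∀ i j : ZMod 2, ∀ x ∈ ggr i, ∀ y ∈ ggr j,
      ρ (bra x y) = ρ x * ρ y - ((-1 : F) ^ (i.val * j.val)) • (ρ y * ρ x))
    {i j : ZMod 2} {x y : g} (hx : x ∈ I ⊓ ggr i) (hy : y ∈ I ⊓ ggr j) :
    ρ x * ρ y - ((-1 : F) ^ (i.val * j.val)) • (ρ y * ρ x) ∈ (I ⊓ ggr (i + j)).map ρ :=
  ⟨bra x y, ⟨hIdeal x y hy.1, hbgr i j x hx.2 y hy.2⟩, hρbra i j x hx.2 y hy.2⟩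

lemma jointKer_map_ne_bot [Nontrivial M] [FiniteDimensional F I] (h2 : (2 : F) ≠ 0)
    (hbgr : ∀ i j : ZMod 2, ∀ x ∈ ggr i, ∀ y ∈ ggr j, bra x y ∈ ggr (i + j))
    (hIdeal : ∀ x : g, ∀ y ∈ I, bra x y ∈ I) (hI : I = (I ⊓ ggr 0) ⊔ (I ⊓ ggr 1))
    (hρbra : ∀ i j : ZMod 2, ∀ x ∈ ggr i, ∀ y ∈ ggr j,
      ρ (bra x y) = ρ x * ρ y - ((-1 : F) ^ (i.val * j.val)) • (ρ y * ρ x))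
    (hnil : ∀ x ∈ I, IsNilpotent (ρ x)) :
    jointKer (I.map ρ) ≠ ⊥ := by
  have := Submodule.finiteDimensional_of_le (inf_le_left : I ⊓ ggr 0 ≤ I)
  have := Submodule.finiteDimensional_of_le (inf_le_left : I ⊓ ggr 1 ≤ I)
  rw [hI, Submodule.map_sup]
  refine jointKer_sup_ne_bot_of_superCommutator_mem h2 _ _ ?_ ?_ ?_ ?_
  · rintro _ ⟨x, hx, rfl⟩ _ ⟨y, hy, rfl⟩
    simpa using superCommutator_mem_map hbgr hIdeal hρbra hx hy
  · rintro _ ⟨x, hx, rfl⟩ _ ⟨y, hy, rfl⟩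
    simpa using superCommutator_mem_map hbgr hIdeal hρbra hx hy
  · rintro _ ⟨x, hx, rfl⟩ _ ⟨y, hy, rfl⟩
    have h := superCommutator_mem_map hbgr hIdeal hρbra hx hy
    rwa [show (1 : ZMod 2) + 1 = 0 from rfl, show (1 : ZMod 2).val * (1 : ZMod 2).val = 1 from rfl,
      pow_one, neg_one_smul, sub_neg_eq_add] at h
  · rintro _ ⟨x, hx, rfl⟩
    exact hnil x hx.1

lemma apply_mem_jointKer_map (hgg : DirectSum.IsInternal ggr)
    (hskew : ∀ i j : ZMod 2, ∀ x ∈ ggr i, ∀ y ∈ ggr j,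
      bra x y = (-((-1 : F) ^ (i.val * j.val))) • bra y x)
    (hIdeal : ∀ x : g, ∀ y ∈ I, bra x y ∈ I) (hI : I = (I ⊓ ggr 0) ⊔ (I ⊓ ggr 1))
    (hρbra : ∀ i j : ZMod 2, ∀ x ∈ ggr i, ∀ y ∈ ggr j,
      ρ (bra x y) = ρ x * ρ y - ((-1 : F) ^ (i.val * j.val)) • (ρ y * ρ x))
    (z : g) {m : M} (hm : m ∈ jointKer (I.map ρ)) : ρ z m ∈ jointKer (I.map ρ) := by
  have hhom {j : ZMod 2} {z : g} (hz : z ∈ ggr j) : ρ z m ∈ jointKer (I.map ρ) := by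
    refine (mem_jointKer_map_iff_of_homogeneous hI).2 fun i x hx ↦ ?_
    -- `ρ x (ρ z m) = ρ [x, z] m ± ρ z (ρ x m)`, and `[x, z] ∈ I` since `I` is an ideal
    have hxz : bra x z ∈ I := by
      rw [hskew i j x hx.2 z hz]
      exact I.smul_mem _ (hIdeal z x hx.1)
    have h := LinearMap.congr_fun (hρbra i j x hx.2 z hz) m
    rw [mem_jointKer_map] at hm
    rwa [hm _ hxz, LinearMap.sub_apply, LinearMap.smul_apply, Module.End.mul_apply,
      Module.End.mul_apply, hm x hx.1, map_zero, smul_zero, sub_zero, eq_comm] at h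
  obtain ⟨z₀, hz₀, z₁, hz₁, rfl⟩ := Submodule.mem_sup.1 (hgg.sup_eq_top_of_zmod_two ▸ trivial :
    z ∈ ggr 0 ⊔ ggr 1)
  rw [map_add, LinearMap.add_apply]
  exact add_mem (hhom hz₀) (hhom hz₁)

lemma jointKer_map_eq_sup_inf (hMg : DirectSum.IsInternal Mgr)
    (hI : I = (I ⊓ ggr 0) ⊔ (I ⊓ ggr 1))
    (hρgr : ∀ i j : ZMod 2, ∀ x ∈ ggr i, ∀ m ∈ Mgr j, ρ x m ∈ Mgr (i + j)) :
    jointKer (I.map ρ) = (jointKer (I.map ρ) ⊓ Mgr 0) ⊔ (jointKer (I.map ρ) ⊓ Mgr 1) := by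
  refine le_antisymm (fun m hm ↦ ?_) (sup_le inf_le_left inf_le_left)
  obtain ⟨m₀, hm₀, m₁, hm₁, rfl⟩ := Submodule.mem_sup.1 (hMg.sup_eq_top_of_zmod_two ▸ trivial :
    m ∈ Mgr 0 ⊔ Mgr 1)
  -- a homogeneous `x ∈ I` maps `m₀` and `m₁` into different components, so both images vanish
  have hsplit (i : ZMod 2) (x : g) (hx : x ∈ I ⊓ ggr i) : ρ x m₀ = 0 ∧ ρ x m₁ = 0 := by
    have hsum : ρ x m₀ = -ρ x m₁ :=
      eq_neg_of_add_eq_zero_left (by rw [← map_add]; exact (mem_jointKer_map ρ I).1 hm x hx.1)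
    have hdisj := hMg.submodule_iSupIndep.pairwiseDisjoint (show i + 0 ≠ i + 1 by simp)
    have h₀ : ρ x m₀ = 0 := Submodule.disjoint_def.1 hdisj _ (hρgr i 0 x hx.2 m₀ hm₀)
      (hsum ▸ neg_mem (hρgr i 1 x hx.2 m₁ hm₁))
    exact ⟨h₀, neg_eq_zero.1 (hsum ▸ h₀)⟩
  exact Submodule.add_mem_sup
    ⟨(mem_jointKer_map_iff_of_homogeneous hI).2 fun i x hx ↦ (hsplit i x hx).1, hm₀⟩
    ⟨(mem_jointKer_map_iff_of_homogeneous hI).2 fun i x hx ↦ (hsplit i x hx).2, hm₁⟩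

end GradedIdeal

theorem graded_ideal_acts_trivially_general
    {F : Type} [Field F] (p : ℕ) (hp : 2 < p) [CharP F p]
    -- the Lie superalgebra g
    {g : Type} [AddCommGroup g] [Module F g]
    (bra : g →ₗ[F] g →ₗ[F] g)
    (ggr : ZMod 2 → Submodule F g) (hgg : DirectSum.IsInternal ggr)
    (hbgr : ∀ i j : ZMod 2, ∀ x ∈ ggr i, ∀ y ∈ ggr j, bra x y ∈ ggr (i + j))
    (hskew : ∀ i j : ZMod 2, ∀ x ∈ ggr i, ∀ y ∈ ggr j,
      bra x y = (-((-1 : F) ^ (i.val * j.val))) • bra y x)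
    -- a finite-dimensional Z/2-graded ideal I of g
    (I : Submodule F g) [FiniteDimensional F ↥I]
    (hIdeal : ∀ x : g, ∀ y ∈ I, bra x y ∈ I)
    (hIgraded : I = (I ⊓ ggr 0) ⊔ (I ⊓ ggr 1))
    -- a simple Z/2-graded g-module M
    {M : Type} [AddCommGroup M] [Module F M]
    (Mgr : ZMod 2 → Submodule F M) (hMg : DirectSum.IsInternal Mgr)
    (ρ : g →ₗ[F] Module.End F M)
    (hρgr : ∀ i j : ZMod 2, ∀ x ∈ ggr i, ∀ m ∈ Mgr j, ρ x m ∈ Mgr (i + j))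
    (hρbra : ∀ i j : ZMod 2, ∀ x ∈ ggr i, ∀ y ∈ ggr j,
      ρ (bra x y) = ρ x * ρ y - ((-1 : F) ^ (i.val * j.val)) • (ρ y * ρ x))
    (hMne : (⊤ : Submodule F M) ≠ ⊥)
    (hsimple : ∀ N : Submodule F M, (∀ x : g, ∀ m ∈ N, ρ x m ∈ N) →
      N = (N ⊓ Mgr 0) ⊔ (N ⊓ Mgr 1) → N = ⊥ ∨ N = ⊤)
    -- every element of I acts nilpotently
    (hnil : ∀ x ∈ I, IsNilpotent (ρ x)) :
    ∀ x ∈ I, ∀ m : M, ρ x m = 0 := by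
  have h2 : (2 : F) ≠ 0 := Ring.two_ne_zero (by rw [ringChar.eq F p]; omega)
  have : Nontrivial M := (Submodule.nontrivial_iff F).1 ⟨⊤, ⊥, hMne⟩
  rcases hsimple (jointKer (I.map ρ))
      (fun z _ ↦ apply_mem_jointKer_map hgg hskew hIdeal hIgraded hρbra z)
      (jointKer_map_eq_sup_inf hMg hIgraded hρgr) with hbot | htop
  · exact absurd hbot (jointKer_map_ne_bot h2 hbgr hIdeal hIgraded hρbra hnil)
  · intro x hx m
    exact (mem_jointKer_map ρ I).1 (htop ▸ Submodule.mem_top) x hx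

/-- if `I` is a finite-dimensional Z/2-graded ideal of a Lie superalgebra
`g` and `M` a simple g-module on which every element of `I` acts nilpotently,
then `I · M = 0`. -/
theorem graded_ideal_acts_trivially
    {F : Type} [Field F] [IsAlgClosed F] (p : ℕ) [Fact p.Prime] (hp : 2 < p) [CharP F p]
    -- the Lie superalgebra g
    {g : Type} [AddCommGroup g] [Module F g]
    (bra : g →ₗ[F] g →ₗ[F] g)
    (ggr : ZMod 2 → Submodule F g) (hgg : DirectSum.IsInternal ggr)
    (hbgr : ∀ i j : ZMod 2, ∀ x ∈ ggr i, ∀ y ∈ ggr j, bra x y ∈ ggr (i + j))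
    (hskew : ∀ i j : ZMod 2, ∀ x ∈ ggr i, ∀ y ∈ ggr j,
      bra x y = (-((-1 : F) ^ (i.val * j.val))) • bra y x)
    (hjac : ∀ i j : ZMod 2, ∀ x ∈ ggr i, ∀ y ∈ ggr j, ∀ z : g,
      bra x (bra y z) = bra (bra x y) z + ((-1 : F) ^ (i.val * j.val)) • bra y (bra x z))
    -- a finite-dimensional Z/2-graded ideal I of g
    (I : Submodule F g) [FiniteDimensional F ↥I]
    (hIdeal : ∀ x : g, ∀ y ∈ I, bra x y ∈ I)
    (hIgraded : I = (I ⊓ ggr 0) ⊔ (I ⊓ ggr 1))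
    -- a simple Z/2-graded g-module M
    {M : Type} [AddCommGroup M] [Module F M]
    (Mgr : ZMod 2 → Submodule F M) (hMg : DirectSum.IsInternal Mgr)
    (ρ : g →ₗ[F] Module.End F M)
    (hρgr : ∀ i j : ZMod 2, ∀ x ∈ ggr i, ∀ m ∈ Mgr j, ρ x m ∈ Mgr (i + j))
    (hρbra : ∀ i j : ZMod 2, ∀ x ∈ ggr i, ∀ y ∈ ggr j,
      ρ (bra x y) = ρ x * ρ y - ((-1 : F) ^ (i.val * j.val)) • (ρ y * ρ x))
    (hMne : (⊤ : Submodule F M) ≠ ⊥)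
    (hsimple : ∀ N : Submodule F M, (∀ x : g, ∀ m ∈ N, ρ x m ∈ N) →
      N = (N ⊓ Mgr 0) ⊔ (N ⊓ Mgr 1) → N = ⊥ ∨ N = ⊤)
    -- every element of I acts nilpotently
    (hnil : ∀ x ∈ I, IsNilpotent (ρ x)) :
    ∀ x ∈ I, ∀ m : M, ρ x m = 0 :=
  graded_ideal_acts_trivially_general p hp bra ggr hgg hbgr hskew I hIdeal hIgraded Mgr hMg ρ hρgr
    hρbra hMne hsimple hnil
end

section
/- Let g = gl(m|n) = g₋₁ ⊕ g₀ ⊕ g₁ with its Z-grading, χ ∈ g₀* with χ(N₀⁺) = 0, M a simple u(g₀,χ)-module viewed as a u(g₀ ⊕ g₁,χ)-module with g₁M = 0, and Z^χ(M) = u(g,χ) ⊗_{u(g₀⊕g₁,χ)} M the graded baby Verma module. If the element e₁⋯e_l f₁⋯f_l (product over bases of g₁ and g₋₁ in ascending height order) acts on a maximal vector v ∈ M by a nonzero scalar f₁(λ), then Z^χ(M) is simple. -/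
/-! The general linear Lie superalgebra gl(m|n) realized concretely as
(m+n)×(m+n) matrices, with its Z/2-grading and super bracket. -/

/-- Parity of an index: `0` for the first `m` indices, `1` for the last `n`. -/
def glPar (m n : ℕ) (k : Fin (m + n)) : ZMod 2 := if (k : ℕ) < m then 0 else 1

/-- Matrix units, the standard basis of gl(m|n). -/
def glE (F : Type) [Field F] (m n : ℕ) (k l : Fin (m + n)) :
    Matrix (Fin (m + n)) (Fin (m + n)) F := Matrix.single k l 1

/-- The Z/2-grading of gl(m|n). -/
def glGr (F : Type) [Field F] (m n : ℕ) (i : ZMod 2) :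
    Submodule F (Matrix (Fin (m + n)) (Fin (m + n)) F) where
  carrier := {X | ∀ k l, glPar m n k + glPar m n l ≠ i → X k l = 0}
  add_mem' := by intro a b ha hb k l h; simp [Matrix.add_apply, ha k l h, hb k l h]
  zero_mem' := by intro k l h; simp
  smul_mem' := by intro c X hX k l h; simp [Matrix.smul_apply, hX k l h]

/-- The odd component of a matrix. -/
def glOdd (F : Type) [Field F] (m n : ℕ) (X : Matrix (Fin (m + n)) (Fin (m + n)) F) :
    Matrix (Fin (m + n)) (Fin (m + n)) F :=
  Matrix.of fun k l => if glPar m n k + glPar m n l = 1 then X k l else 0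

/-- The super bracket of gl(m|n): on homogeneous X, Y it is XY − (−1)^{p(X)p(Y)}YX. -/
def glBra (F : Type) [Field F] (m n : ℕ) (X Y : Matrix (Fin (m + n)) (Fin (m + n)) F) :
    Matrix (Fin (m + n)) (Fin (m + n)) F :=
  X * Y - Y * X + 2 • (glOdd F m n Y * glOdd F m n X)

/-!
The monomials `f_s ⊗ w` (`s` a list of roots of `g₋₁`, `w ∈ M`) span a `g`-stable subspace
containing `M`, so by uniqueness in the universal property they span `Z`. The `f_q` anticommute
and square to zero; hence a nonzero submodule `N` contains a nonzero vector killed by `g₋₁`, and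
every such vector is `f₁ ⋯ f_l ⊗ w`. As `f₁ ⋯ f_l` commutes with `g₀` up to a scalar, simplicity
of `M` gives `f₁ ⋯ f_l ⊗ M ⊆ N`; applying `e₁ ⋯ e_l` yields `f₁(λ) v ∈ N`, so `M ⊆ N` and `N = Z`.
-/

namespace GlSuper

variable {F : Type} [Field F] {m n : ℕ}

def eOdd (F : Type) [Field F] (m n : ℕ) (q : Fin m × Fin n) :
    Matrix (Fin (m + n)) (Fin (m + n)) F :=
  glE F m n (q.1.castAdd n) (Fin.natAdd m q.2)

def fOdd (F : Type) [Field F] (m n : ℕ) (q : Fin m × Fin n) :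
    Matrix (Fin (m + n)) (Fin (m + n)) F :=
  glE F m n (Fin.natAdd m q.2) (q.1.castAdd n)

def glLevel (m n : ℕ) (k : Fin (m + n)) : ℤ := if (k : ℕ) < m then 0 else 1

/-- The piece `g_d` of the consistent ℤ-grading; `g₁` is the upper-right block. -/
def glZGr (F : Type) [Field F] (m n : ℕ) (d : ℤ) :
    Submodule F (Matrix (Fin (m + n)) (Fin (m + n)) F) where
  carrier := {X | ∀ k l, glLevel m n l - glLevel m n k ≠ d → X k l = 0}
  add_mem' ha hb k l h := by simp [ha k l h, hb k l h]
  zero_mem' _ _ _ := Matrix.zero_apply _ _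
  smul_mem' c X hX k l h := by simp [hX k l h]

@[simp] lemma glLevel_castAdd (a : Fin m) : glLevel m n (a.castAdd n) = 0 := by
  simp [glLevel]

@[simp] lemma glLevel_natAdd (b : Fin n) : glLevel m n (Fin.natAdd m b) = 1 := by
  simp [glLevel]

lemma glLevel_eq_zero_or_one (k : Fin (m + n)) : glLevel m n k = 0 ∨ glLevel m n k = 1 := by
  unfold glLevel; split_ifs <;> simp

lemma glE_mem_glZGr (k l : Fin (m + n)) :
    glE F m n k l ∈ glZGr F m n (glLevel m n l - glLevel m n k) := by
  intro k' l' h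
  simp only [glE, Matrix.single_apply]
  split_ifs with hkl
  · exact absurd (by rw [hkl.1, hkl.2]) h
  · rfl

lemma mul_mem_glZGr {d e : ℤ} {X Y : Matrix (Fin (m + n)) (Fin (m + n)) F}
    (hX : X ∈ glZGr F m n d) (hY : Y ∈ glZGr F m n e) : X * Y ∈ glZGr F m n (d + e) := by
  intro k l h
  rw [Matrix.mul_apply]
  refine Finset.sum_eq_zero fun i _ => ?_
  by_cases hki : glLevel m n i - glLevel m n k = d
  · rw [hY i l (by omega), mul_zero]
  · rw [hX k i hki, zero_mul]

lemma glZGr_neg_two : glZGr F m n (-2) = ⊥ := by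
  refine eq_bot_iff.mpr fun X hX => ?_
  ext k l
  exact hX k l (by rcases glLevel_eq_zero_or_one k with h | h <;>
    rcases glLevel_eq_zero_or_one l with h' | h' <;> omega)

lemma glZGr_le_glGr (d : ℤ) : glZGr F m n d ≤ glGr F m n d := by
  intro X hX k l h
  refine hX k l fun hd => h ?_
  rw [← hd]
  unfold glPar glLevel
  split_ifs <;> decide

lemma glGr_zero_le_glZGr : glGr F m n 0 ≤ glZGr F m n 0 := by
  intro X hX k l h
  refine hX k l fun hp => h ?_
  revert hp
  unfold glPar glLevel
  split_ifs <;> decide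

lemma eq_sum_smul_glE (X : Matrix (Fin (m + n)) (Fin (m + n)) F) :
    X = ∑ k, ∑ l, X k l • glE F m n k l := by
  simp only [glE, Matrix.smul_single, smul_eq_mul, mul_one]
  exact Matrix.matrix_eq_sum_single X

lemma glZGr_le_span_glE (d : ℤ) : glZGr F m n d ≤
    Submodule.span F {A | ∃ k l, glLevel m n l - glLevel m n k = d ∧ glE F m n k l = A} := by
  intro X hX
  rw [eq_sum_smul_glE X]
  refine Submodule.sum_mem _ fun k _ => Submodule.sum_mem _ fun l _ => ?_
  by_cases h : glLevel m n l - glLevel m n k = d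
  · exact Submodule.smul_mem _ _ (Submodule.subset_span ⟨k, l, h, rfl⟩)
  · rw [hX k l h, zero_smul]
    exact Submodule.zero_mem _

lemma glZGr_neg_one_le_span : glZGr F m n (-1) ≤ Submodule.span F (Set.range (fOdd F m n)) := by
  refine (glZGr_le_span_glE _).trans (Submodule.span_le.mpr ?_)
  rintro _ ⟨k, l, h, rfl⟩
  induction k using Fin.addCases <;> induction l using Fin.addCases <;> simp at h
  exact Submodule.subset_span ⟨(_, _), rfl⟩

lemma glZGr_one_le_span : glZGr F m n 1 ≤ Submodule.span F (Set.range (eOdd F m n)) := by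
  refine (glZGr_le_span_glE _).trans (Submodule.span_le.mpr ?_)
  rintro _ ⟨k, l, h, rfl⟩
  induction k using Fin.addCases <;> induction l using Fin.addCases <;> simp at h
  exact Submodule.subset_span ⟨(_, _), rfl⟩

lemma glZGr_sup_eq_top :
    glZGr F m n (-1) ⊔ glZGr F m n 0 ⊔ glZGr F m n 1 = ⊤ := by
  refine eq_top_iff.mpr fun X _ => ?_
  rw [eq_sum_smul_glE X]
  refine Submodule.sum_mem _ fun k _ => Submodule.sum_mem _ fun l _ => Submodule.smul_mem _ _ ?_
  have hkl := glE_mem_glZGr (F := F) k l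
  rcases glLevel_eq_zero_or_one k with h | h <;> rcases glLevel_eq_zero_or_one l with h' | h' <;>
    rw [h, h'] at hkl <;> norm_num at hkl
  · exact Submodule.mem_sup_left (Submodule.mem_sup_right hkl)
  · exact Submodule.mem_sup_right hkl
  · exact Submodule.mem_sup_left (Submodule.mem_sup_left hkl)
  · exact Submodule.mem_sup_left (Submodule.mem_sup_right hkl)

lemma fOdd_mem_glZGr (q : Fin m × Fin n) : fOdd F m n q ∈ glZGr F m n (-1) := by
  simpa [fOdd] using glE_mem_glZGr (F := F) (Fin.natAdd m q.2) (q.1.castAdd n)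

lemma eOdd_mem_glZGr (q : Fin m × Fin n) : eOdd F m n q ∈ glZGr F m n 1 := by
  simpa [eOdd] using glE_mem_glZGr (F := F) (q.1.castAdd n) (Fin.natAdd m q.2)

lemma fOdd_mem_glGr (q : Fin m × Fin n) : fOdd F m n q ∈ glGr F m n 1 := by
  simpa using glZGr_le_glGr _ (fOdd_mem_glZGr (F := F) q)

lemma eOdd_mem_glGr (q : Fin m × Fin n) : eOdd F m n q ∈ glGr F m n 1 := by
  simpa using glZGr_le_glGr _ (eOdd_mem_glZGr (F := F) q)

lemma glOdd_of_mem_odd {X : Matrix (Fin (m + n)) (Fin (m + n)) F} (hX : X ∈ glGr F m n 1) :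
    glOdd F m n X = X := by
  ext k l
  simp only [glOdd, Matrix.of_apply]
  split_ifs with h
  · rfl
  · exact (hX k l h).symm

lemma glOdd_of_mem_even {X : Matrix (Fin (m + n)) (Fin (m + n)) F} (hX : X ∈ glGr F m n 0) :
    glOdd F m n X = 0 := by
  ext k l
  simp only [glOdd, Matrix.of_apply]
  split_ifs with h
  · exact hX k l (by rw [h]; decide)
  · rfl

lemma glBra_fOdd_fOdd (q r : Fin m × Fin n) : glBra F m n (fOdd F m n q) (fOdd F m n r) = 0 := by
  have hprod (q r : Fin m × Fin n) : fOdd F m n q * fOdd F m n r = 0 := by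
    simpa [glZGr_neg_two] using mul_mem_glZGr (fOdd_mem_glZGr (F := F) q) (fOdd_mem_glZGr r)
  simp [glBra, glOdd_of_mem_odd (fOdd_mem_glGr _), hprod]

lemma glBra_eOdd_fOdd_mem (q r : Fin m × Fin n) :
    glBra F m n (eOdd F m n q) (fOdd F m n r) ∈ glGr F m n 0 := by
  have hef := mul_mem_glZGr (eOdd_mem_glZGr (F := F) q) (fOdd_mem_glZGr r)
  have hfe := mul_mem_glZGr (fOdd_mem_glZGr (F := F) r) (eOdd_mem_glZGr q)
  norm_num at hef hfe
  rw [glBra, glOdd_of_mem_odd (fOdd_mem_glGr _), glOdd_of_mem_odd (eOdd_mem_glGr _)]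
  exact glZGr_le_glGr 0 (add_mem (sub_mem hef hfe) (Submodule.smul_of_tower_mem _ 2 hfe))

lemma glBra_even_fOdd_mem_span {X : Matrix (Fin (m + n)) (Fin (m + n)) F}
    (hX : X ∈ glGr F m n 0) (q : Fin m × Fin n) :
    glBra F m n X (fOdd F m n q) ∈ Submodule.span F (Set.range (fOdd F m n)) := by
  have hX' := glGr_zero_le_glZGr hX
  have hXf := mul_mem_glZGr hX' (fOdd_mem_glZGr q)
  have hfX := mul_mem_glZGr (fOdd_mem_glZGr q) hX'
  norm_num at hXf hfX
  rw [glBra, glOdd_of_mem_even hX, mul_zero, smul_zero, add_zero]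
  exact glZGr_neg_one_le_span (sub_mem hXf hfX)

section Rep

variable {Z : Type} [AddCommGroup Z] [Module F Z]

def IsSuperRep (σ : Matrix (Fin (m + n)) (Fin (m + n)) F →ₗ[F] Module.End F Z) : Prop :=
  ∀ i j : ZMod 2, ∀ X ∈ glGr F m n i, ∀ Y ∈ glGr F m n j,
    σ (glBra F m n X Y) = σ X * σ Y - ((-1 : F) ^ (i.val * j.val)) • (σ Y * σ X)

def fProd (σ : Matrix (Fin (m + n)) (Fin (m + n)) F →ₗ[F] Module.End F Z)
    (s : List (Fin m × Fin n)) : Module.End F Z :=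
  (s.map fun q => σ (fOdd F m n q)).prod

def HasPChar (p : ℕ) (χ : Matrix (Fin (m + n)) (Fin (m + n)) F →ₗ[F] F)
    (σ : Matrix (Fin (m + n)) (Fin (m + n)) F →ₗ[F] Module.End F Z) : Prop :=
  ∀ X ∈ glGr F m n 0, (σ X) ^ p - σ (X ^ p) = (χ X) ^ p • (1 : Module.End F Z)

variable {σ : Matrix (Fin (m + n)) (Fin (m + n)) F →ₗ[F] Module.End F Z}

@[simp] lemma fProd_nil : fProd σ [] = 1 := rfl

lemma fProd_cons (q : Fin m × Fin n) (s : List (Fin m × Fin n)) :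
    fProd σ (q :: s) = σ (fOdd F m n q) * fProd σ s := List.prod_cons

lemma fProd_append (s t : List (Fin m × Fin n)) : fProd σ (s ++ t) = fProd σ s * fProd σ t := by
  simp [fProd]

lemma IsSuperRep.even_odd (hσ : IsSuperRep σ) {X Y : Matrix (Fin (m + n)) (Fin (m + n)) F}
    (hX : X ∈ glGr F m n 0) (hY : Y ∈ glGr F m n 1) :
    σ (glBra F m n X Y) = σ X * σ Y - σ Y * σ X := by
  simpa using hσ 0 1 X hX Y hY

lemma IsSuperRep.odd_odd (hσ : IsSuperRep σ) {X Y : Matrix (Fin (m + n)) (Fin (m + n)) F}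
    (hX : X ∈ glGr F m n 1) (hY : Y ∈ glGr F m n 1) :
    σ (glBra F m n X Y) = σ X * σ Y + σ Y * σ X := by
  simpa [show (1 : ZMod 2).val = 1 from rfl] using hσ 1 1 X hX Y hY

lemma fOdd_anticomm (hσ : IsSuperRep σ) (q r : Fin m × Fin n) :
    σ (fOdd F m n q) * σ (fOdd F m n r) = -(σ (fOdd F m n r) * σ (fOdd F m n q)) := by
  have h := hσ.odd_odd (fOdd_mem_glGr q) (fOdd_mem_glGr r)
  rw [glBra_fOdd_fOdd, map_zero] at h
  exact eq_neg_of_add_eq_zero_left h.symm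

lemma fOdd_mul_self (hσ : IsSuperRep σ) (h2 : (2 : F) ≠ 0) (q : Fin m × Fin n) :
    σ (fOdd F m n q) * σ (fOdd F m n q) = 0 := by
  have h := fOdd_anticomm hσ q q
  rw [eq_neg_iff_add_eq_zero, ← two_smul F] at h
  exact (smul_eq_zero.mp h).resolve_left h2

lemma fProd_perm (hσ : IsSuperRep σ) {s s' : List (Fin m × Fin n)} (h : s.Perm s') :
    ∃ c : F, c ≠ 0 ∧ fProd σ s = c • fProd σ s' := by
  induction h with
  | nil => exact ⟨1, one_ne_zero, by simp⟩
  | cons q _ ih =>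
    obtain ⟨c, hc, h⟩ := ih
    exact ⟨c, hc, by rw [fProd_cons, fProd_cons, h, mul_smul_comm]⟩
  | swap q r u =>
    refine ⟨-1, by simp, ?_⟩
    simp only [fProd_cons, ← mul_assoc, fOdd_anticomm hσ r q, neg_mul, neg_smul, one_smul]
  | trans _ _ ih ih' =>
    obtain ⟨c, hc, h⟩ := ih
    obtain ⟨c', hc', h'⟩ := ih'
    exact ⟨c * c', mul_ne_zero hc hc', by rw [h, h', smul_smul]⟩

lemma fProd_eq_zero_of_not_nodup (hσ : IsSuperRep σ) (h2 : (2 : F) ≠ 0)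
    {s : List (Fin m × Fin n)} (hs : ¬ s.Nodup) : fProd σ s = 0 := by
  classical
  induction s with
  | nil => exact absurd List.nodup_nil hs
  | cons q u ih =>
    by_cases hq : q ∈ u
    · obtain ⟨c, -, h⟩ := fProd_perm hσ (List.perm_cons_erase hq)
      rw [fProd_cons, h, fProd_cons, mul_smul_comm, ← mul_assoc, fOdd_mul_self hσ h2,
        zero_mul, smul_zero]
    · rw [fProd_cons, ih (fun hu => hs (List.nodup_cons.mpr ⟨hq, hu⟩)), mul_zero]

lemma fProd_apply_eq_zero {z : Z} (hz : ∀ q, σ (fOdd F m n q) z = 0)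
    {s : List (Fin m × Fin n)} (hs : s ≠ []) : fProd σ s z = 0 := by
  obtain ⟨u, q, rfl⟩ := List.eq_nil_or_concat s |>.resolve_left hs
  simp [fProd_append, fProd_cons, hz]

lemma exists_ne_zero_fOdd_eq_zero (hσ : IsSuperRep σ) (h2 : (2 : F) ≠ 0) {N : Submodule F Z}
    (hN : ∀ q, ∀ z ∈ N, σ (fOdd F m n q) z ∈ N) {z : Z} (hzN : z ∈ N) (hz : z ≠ 0) :
    ∃ z' ∈ N, z' ≠ 0 ∧ ∀ q, σ (fOdd F m n q) z' = 0 := by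
  suffices h : ∀ k, ∀ z ∈ N, z ≠ 0 →
      (∀ s : List (Fin m × Fin n), s.length = k → fProd σ s z = 0) →
      ∃ z' ∈ N, z' ≠ 0 ∧ ∀ q, σ (fOdd F m n q) z' = 0 by
    refine h (Fintype.card (Fin m × Fin n) + 1) z hzN hz fun s hs => ?_
    rw [fProd_eq_zero_of_not_nodup hσ h2 fun hnd => by have := hnd.length_le_card; omega]
    rfl
  intro k
  induction k with
  | zero => exact fun z _ hz h => absurd (by simpa using h [] rfl) hz
  | succ k ih =>
    intro z hzN hz h
    by_cases hkill : ∀ q, σ (fOdd F m n q) z = 0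
    · exact ⟨z, hzN, hz, hkill⟩
    push Not at hkill
    obtain ⟨q, hq⟩ := hkill
    exact ih _ (hN q z hzN) hq fun s hs => by
      simpa [fProd_append, fProd_cons] using h (s ++ [q]) (by simp [hs])

lemma list_prod_apply_mem {N : Submodule F Z} {l : List (Module.End F Z)}
    (hl : ∀ A ∈ l, ∀ z ∈ N, A z ∈ N) {z : Z} (hz : z ∈ N) : l.prod z ∈ N := by
  induction l with
  | nil => exact hz
  | cons A l ih =>
    rw [List.prod_cons, Module.End.mul_apply]
    exact hl A List.mem_cons_self _ (ih fun B hB => hl B (List.mem_cons_of_mem A hB))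

variable (σ) in
def fProdSpan (k : ℕ) : Submodule F (Module.End F Z) :=
  Submodule.span F {A | ∃ s : List (Fin m × Fin n), s.length = k ∧ fProd σ s = A}

lemma fProd_mem_fProdSpan (s : List (Fin m × Fin n)) : fProd σ s ∈ fProdSpan σ s.length :=
  Submodule.subset_span ⟨s, rfl, rfl⟩

lemma fOdd_mul_mem_fProdSpan {k : ℕ} (q : Fin m × Fin n) {A : Module.End F Z}
    (hA : A ∈ fProdSpan σ k) : σ (fOdd F m n q) * A ∈ fProdSpan σ (k + 1) := by
  induction hA using Submodule.span_induction with
  | mem _ h =>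
    obtain ⟨s, rfl, rfl⟩ := h
    rw [← fProd_cons]
    exact fProd_mem_fProdSpan (q :: s)
  | zero => simp
  | add _ _ _ _ h h' => simpa [mul_add] using add_mem h h'
  | smul c _ _ h => simpa using Submodule.smul_mem _ c h

lemma mul_fProd_mem_fProdSpan {Y : Matrix (Fin (m + n)) (Fin (m + n)) F}
    (hY : Y ∈ Submodule.span F (Set.range (fOdd F m n))) (s : List (Fin m × Fin n)) :
    σ Y * fProd σ s ∈ fProdSpan σ (s.length + 1) := by
  induction hY using Submodule.span_induction with
  | mem _ h =>
    obtain ⟨q, rfl⟩ := h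
    exact fOdd_mul_mem_fProdSpan q (fProd_mem_fProdSpan s)
  | zero => simp
  | add _ _ _ _ h h' => simpa [add_mul] using add_mem h h'
  | smul c _ _ h => simpa using Submodule.smul_mem _ c h

lemma commutator_fProd_mem_fProdSpan (hσ : IsSuperRep σ)
    {X : Matrix (Fin (m + n)) (Fin (m + n)) F} (hX : X ∈ glGr F m n 0)
    (s : List (Fin m × Fin n)) :
    σ X * fProd σ s - fProd σ s * σ X ∈ fProdSpan σ s.length := by
  induction s with
  | nil => simp
  | cons q u ih =>
    have h := hσ.even_odd hX (fOdd_mem_glGr q)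
    have hsplit : σ X * fProd σ (q :: u) - fProd σ (q :: u) * σ X =
        σ (glBra F m n X (fOdd F m n q)) * fProd σ u +
          σ (fOdd F m n q) * (σ X * fProd σ u - fProd σ u * σ X) := by
      rw [h, fProd_cons]; noncomm_ring
    rw [hsplit]
    exact add_mem (mul_fProd_mem_fProdSpan (glBra_even_fOdd_mem_span hX q) u)
      (fOdd_mul_mem_fProdSpan q ih)

lemma fProdSpan_length_le_span_fProd (hσ : IsSuperRep σ) (h2 : (2 : F) ≠ 0)
    {L : List (Fin m × Fin n)} (hLall : ∀ q, q ∈ L) : fProdSpan σ L.length ≤ F ∙ fProd σ L := by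
  refine Submodule.span_le.mpr ?_
  rintro _ ⟨s, hs, rfl⟩
  by_cases hnd : s.Nodup
  · have hperm : s.Perm L :=
      (List.subperm_of_subset hnd fun q _ => hLall q).perm_of_length_le hs.ge
    obtain ⟨c, -, h⟩ := fProd_perm hσ hperm
    exact h ▸ Submodule.smul_mem _ c (Submodule.mem_span_singleton_self _)
  · rw [fProd_eq_zero_of_not_nodup hσ h2 hnd]
    exact zero_mem _

lemma exists_commutator_fProd_eq_smul (hσ : IsSuperRep σ) (h2 : (2 : F) ≠ 0)
    {L : List (Fin m × Fin n)} (hLall : ∀ q, q ∈ L)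
    {X : Matrix (Fin (m + n)) (Fin (m + n)) F} (hX : X ∈ glGr F m n 0) :
    ∃ c : F, σ X * fProd σ L = fProd σ L * σ X + c • fProd σ L := by
  obtain ⟨c, hc⟩ := Submodule.mem_span_singleton.mp
    (fProdSpan_length_le_span_fProd hσ h2 hLall (commutator_fProd_mem_fProdSpan hσ hX L))
  exact ⟨c, by rw [hc]; abel⟩

lemma forall_apply_mem_of_generators {N : Submodule F Z}
    (h0 : ∀ X ∈ glGr F m n 0, ∀ z ∈ N, σ X z ∈ N)
    (hf : ∀ q, ∀ z ∈ N, σ (fOdd F m n q) z ∈ N) (he : ∀ q, ∀ z ∈ N, σ (eOdd F m n q) z ∈ N) :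
    ∀ X, ∀ z ∈ N, σ X z ∈ N := by
  let stab := (Submodule.compatibleMaps N N).comap σ
  have hneg : glZGr F m n (-1) ≤ stab := glZGr_neg_one_le_span.trans
    (Submodule.span_le.mpr (Set.range_subset_iff.mpr hf))
  have hpos : glZGr F m n 1 ≤ stab := glZGr_one_le_span.trans
    (Submodule.span_le.mpr (Set.range_subset_iff.mpr he))
  have hzero : glZGr F m n 0 ≤ stab := fun X hX => h0 X (glZGr_le_glGr 0 hX)
  intro X
  exact (glZGr_sup_eq_top (F := F) ▸ sup_le (sup_le hneg hzero) hpos) Submodule.mem_top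

variable (σ) in
def quotRep (N : Submodule F Z) (hN : ∀ X, ∀ z ∈ N, σ X z ∈ N) :
    Matrix (Fin (m + n)) (Fin (m + n)) F →ₗ[F] Module.End F (Z ⧸ N) :=
  (N.mapQLinear N).comp (σ.codRestrict (Submodule.compatibleMaps N N) hN)

section Quotient

variable {N : Submodule F Z} {hN : ∀ X, ∀ z ∈ N, σ X z ∈ N}

@[simp] lemma quotRep_mk (X : Matrix (Fin (m + n)) (Fin (m + n)) F) (z : Z) :
    quotRep σ N hN X (Submodule.Quotient.mk z) = Submodule.Quotient.mk (σ X z) := rfl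

@[simp] lemma quotRep_pow_mk (X : Matrix (Fin (m + n)) (Fin (m + n)) F) (k : ℕ) (z : Z) :
    (quotRep σ N hN X ^ k) (Submodule.Quotient.mk z) = Submodule.Quotient.mk ((σ X ^ k) z) := by
  change (N.mapQ N (σ X) (hN X) ^ k) _ = _
  rw [← Submodule.mapQ_pow]
  rfl

lemma IsSuperRep.quotient (hσ : IsSuperRep σ) : IsSuperRep (quotRep σ N hN) := by
  intro i j X hX Y hY
  refine Submodule.linearMap_qext _ (LinearMap.ext fun z => ?_)
  simp [hσ i j X hX Y hY, Submodule.Quotient.mk_sub, Submodule.Quotient.mk_smul]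

lemma HasPChar.quotient {p : ℕ} {χ : Matrix (Fin (m + n)) (Fin (m + n)) F →ₗ[F] F}
    (hχ : HasPChar p χ σ) : HasPChar p χ (quotRep σ N hN) := by
  intro X hX
  refine Submodule.linearMap_qext _ (LinearMap.ext fun z => ?_)
  have h := congr($(hχ X hX) z)
  simp only [LinearMap.sub_apply, LinearMap.smul_apply, Module.End.one_apply] at h
  simp [← Submodule.Quotient.mk_sub, h, Submodule.Quotient.mk_smul]

end Quotient

section Induced

variable {M : Type} [AddCommGroup M] [Module F M]
variable {ρ : Matrix (Fin (m + n)) (Fin (m + n)) F →ₗ[F] Module.End F M} {j : M →ₗ[F] Z}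

/-- The universal property of `Z = u(g,χ) ⊗_{u(g₀ ⊕ g₁,χ)} M`. -/
def IsInduced (p : ℕ) (χ : Matrix (Fin (m + n)) (Fin (m + n)) F →ₗ[F] F)
    (ρ : Matrix (Fin (m + n)) (Fin (m + n)) F →ₗ[F] Module.End F M)
    (σ : Matrix (Fin (m + n)) (Fin (m + n)) F →ₗ[F] Module.End F Z) (j : M →ₗ[F] Z) : Prop :=
  ∀ (W : Type) [AddCommGroup W] [Module F W]
    (τ : Matrix (Fin (m + n)) (Fin (m + n)) F →ₗ[F] Module.End F W),
    IsSuperRep τ → HasPChar p χ τ →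
    ∀ φ : M →ₗ[F] W, (∀ X ∈ glGr F m n 0, ∀ w : M, φ (ρ X w) = τ X (φ w)) →
      (∀ (a : Fin m) (b : Fin n) (w : M),
        τ (glE F m n (a.castAdd n) (Fin.natAdd m b)) (φ w) = 0) →
      ∃! Φ : Z →ₗ[F] W, (∀ X z, Φ (σ X z) = τ X (Φ z)) ∧ Φ ∘ₗ j = φ

/-- Uniqueness in the universal property, applied to `mkQ` and `0` on `Z ⧸ N`. -/
lemma IsInduced.eq_top {p : ℕ} {χ : Matrix (Fin (m + n)) (Fin (m + n)) F →ₗ[F] F}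
    (hind : IsInduced p χ ρ σ j) (hσ : IsSuperRep σ) (hχ : HasPChar p χ σ) {N : Submodule F Z}
    (hN : ∀ X, ∀ z ∈ N, σ X z ∈ N) (hjN : ∀ w, j w ∈ N) : N = ⊤ := by
  obtain ⟨Φ, -, huniq⟩ := hind (Z ⧸ N) (quotRep σ N hN) hσ.quotient hχ.quotient 0
    (by simp) (by simp)
  have hmkQ : N.mkQ = Φ :=
    huniq _ ⟨fun _ _ => rfl, LinearMap.ext fun w => (Submodule.Quotient.mk_eq_zero N).mpr (hjN w)⟩
  have hzero : 0 = Φ := huniq _ ⟨by simp, by simp⟩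
  rw [← Submodule.ker_mkQ N, hmkQ, ← hzero, LinearMap.ker_zero]

variable (σ j) in
def monomialSpan : Submodule F Z :=
  Submodule.span F {z | ∃ (s : List (Fin m × Fin n)) (w : M), fProd σ s (j w) = z}

lemma fProd_apply_mem_monomialSpan (s : List (Fin m × Fin n)) (w : M) :
    fProd σ s (j w) ∈ monomialSpan σ j :=
  Submodule.subset_span ⟨s, w, rfl⟩

lemma apply_mem_monomialSpan {k : ℕ} {A : Module.End F Z} (hA : A ∈ fProdSpan σ k) (w : M) :
    A (j w) ∈ monomialSpan σ j := by
  induction hA using Submodule.span_induction with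
  | mem _ h =>
    obtain ⟨s, -, rfl⟩ := h
    exact fProd_apply_mem_monomialSpan s w
  | zero => exact zero_mem _
  | add _ _ _ _ h h' => exact add_mem h h'
  | smul c _ _ h => exact Submodule.smul_mem _ c h

lemma fOdd_apply_mem_monomialSpan (q : Fin m × Fin n) {z : Z} (hz : z ∈ monomialSpan σ j) :
    σ (fOdd F m n q) z ∈ monomialSpan σ j := by
  refine (Submodule.span_le (p := (monomialSpan σ j).comap (σ (fOdd F m n q)))).mpr ?_ hz
  rintro _ ⟨s, w, rfl⟩
  rw [SetLike.mem_coe, Submodule.mem_comap, ← Module.End.mul_apply, ← fProd_cons]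
  exact fProd_apply_mem_monomialSpan _ w

lemma even_apply_mem_monomialSpan (hσ : IsSuperRep σ)
    (hj : ∀ X ∈ glGr F m n 0, ∀ w, j (ρ X w) = σ X (j w))
    {X : Matrix (Fin (m + n)) (Fin (m + n)) F} (hX : X ∈ glGr F m n 0) {z : Z}
    (hz : z ∈ monomialSpan σ j) : σ X z ∈ monomialSpan σ j := by
  refine (Submodule.span_le (p := (monomialSpan σ j).comap (σ X))).mpr ?_ hz
  rintro _ ⟨s, w, rfl⟩
  have h : σ X (fProd σ s (j w)) =
      fProd σ s (j (ρ X w)) + (σ X * fProd σ s - fProd σ s * σ X) (j w) := by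
    simp [hj X hX]
  rw [SetLike.mem_coe, Submodule.mem_comap, h]
  exact add_mem (fProd_apply_mem_monomialSpan s _)
    (apply_mem_monomialSpan (commutator_fProd_mem_fProdSpan hσ hX s) w)

lemma eOdd_apply_mem_monomialSpan (hσ : IsSuperRep σ)
    (hj : ∀ X ∈ glGr F m n 0, ∀ w, j (ρ X w) = σ X (j w))
    (hje : ∀ q w, σ (eOdd F m n q) (j w) = 0) (q : Fin m × Fin n) {z : Z}
    (hz : z ∈ monomialSpan σ j) : σ (eOdd F m n q) z ∈ monomialSpan σ j := by
  refine (Submodule.span_le (p := (monomialSpan σ j).comap (σ (eOdd F m n q)))).mpr ?_ hz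
  rintro _ ⟨s, w, rfl⟩
  rw [SetLike.mem_coe, Submodule.mem_comap]
  induction s with
  | nil => simp [hje]
  | cons r u ih =>
    have h := hσ.odd_odd (eOdd_mem_glGr q) (fOdd_mem_glGr r)
    rw [fProd_cons, Module.End.mul_apply, ← Module.End.mul_apply (σ (eOdd F m n q)),
      eq_sub_of_add_eq h.symm, LinearMap.sub_apply, Module.End.mul_apply]
    exact sub_mem (even_apply_mem_monomialSpan hσ hj (glBra_eOdd_fOdd_mem q r)
      (fProd_apply_mem_monomialSpan u w)) (fOdd_apply_mem_monomialSpan r ih)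

lemma monomialSpan_eq_top {p : ℕ} {χ : Matrix (Fin (m + n)) (Fin (m + n)) F →ₗ[F] F}
    (hind : IsInduced p χ ρ σ j) (hσ : IsSuperRep σ) (hχ : HasPChar p χ σ)
    (hj : ∀ X ∈ glGr F m n 0, ∀ w, j (ρ X w) = σ X (j w))
    (hje : ∀ q w, σ (eOdd F m n q) (j w) = 0) : monomialSpan σ j = ⊤ :=
  hind.eq_top hσ hχ (forall_apply_mem_of_generators
    (fun _ hX _ => even_apply_mem_monomialSpan hσ hj hX) (fun q _ => fOdd_apply_mem_monomialSpan q)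
    (fun q _ => eOdd_apply_mem_monomialSpan hσ hj hje q))
    (fun w => by simpa using fProd_apply_mem_monomialSpan [] w)

lemma exists_fProd_comp_apply_eq (hσ : IsSuperRep σ) (h2 : (2 : F) ≠ 0)
    {L : List (Fin m × Fin n)} (hLall : ∀ q, q ∈ L)
    (hj : ∀ X ∈ glGr F m n 0, ∀ w, j (ρ X w) = σ X (j w))
    {X : Matrix (Fin (m + n)) (Fin (m + n)) F} (hX : X ∈ glGr F m n 0) :
    ∃ c : F, ∀ w, fProd σ L (j (ρ X w)) = σ X (fProd σ L (j w)) + c • fProd σ L (j w) := by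
  obtain ⟨c, hc⟩ := exists_commutator_fProd_eq_smul hσ h2 hLall hX
  refine ⟨-c, fun w => ?_⟩
  have h := congr($hc (j w))
  simp only [Module.End.mul_apply, LinearMap.add_apply, LinearMap.smul_apply] at h
  rw [hj X hX, h, neg_smul, add_neg_cancel_right]

section Top

variable (hσ : IsSuperRep σ) (h2 : (2 : F) ≠ 0) {L : List (Fin m × Fin n)}
  (hLnd : L.Nodup) (hLall : ∀ q, q ∈ L)
include hσ h2 hLnd hLall

lemma exists_eq_sum_fProd_filter (htop : monomialSpan σ j = ⊤) (z : Z) :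
    ∃ w : Finset (Fin m × Fin n) → M, z = ∑ S, fProd σ (L.filter (· ∈ S)) (j (w S)) := by
  let T : (Finset (Fin m × Fin n) → M) →ₗ[F] Z :=
    ∑ S, fProd σ (L.filter (· ∈ S)) ∘ₗ j ∘ₗ LinearMap.proj S
  have hT (S : Finset (Fin m × Fin n)) (x : M) :
      T (Pi.single S x) = fProd σ (L.filter (· ∈ S)) (j x) := by
    rw [LinearMap.sum_apply, Finset.sum_eq_single S (fun S' _ h => by simp [h]) (by simp)]
    simp
  have hrange : monomialSpan σ j ≤ LinearMap.range T := by
    refine Submodule.span_le.mpr ?_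
    rintro _ ⟨s, w, rfl⟩
    by_cases hnd : s.Nodup
    · have hperm : s.Perm (L.filter (· ∈ s.toFinset)) :=
        List.perm_of_nodup_nodup_toFinset_eq hnd (hLnd.filter _) (by ext; simp [hLall])
      obtain ⟨c, -, h⟩ := fProd_perm hσ hperm
      exact ⟨Pi.single s.toFinset (c • w), by rw [hT, h, map_smul, map_smul]; rfl⟩
    · exact ⟨0, by simp [fProd_eq_zero_of_not_nodup hσ h2 hnd]⟩
  obtain ⟨w, rfl⟩ := hrange (htop ▸ Submodule.mem_top : z ∈ monomialSpan σ j)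
  exact ⟨w, by simp [T]⟩

/-- Write `z = ∑_S f_{L ∩ S} ⊗ w_S`. Applying `f_{L ∖ S}` kills `z` and every term with
`T ⊈ S`, so strong induction on `S` gives `w_S = 0` for all `S ≠ univ`. -/
lemma exists_eq_fProd_of_fOdd_eq_zero (htop : monomialSpan σ j = ⊤)
    (hinj : ∀ w, fProd σ L (j w) = 0 → w = 0) {z : Z} (hz : ∀ q, σ (fOdd F m n q) z = 0) :
    ∃ w, z = fProd σ L (j w) := by
  obtain ⟨w, rfl⟩ := exists_eq_sum_fProd_filter hσ h2 hLnd hLall htop z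
  have hvanish : ∀ S, S ≠ Finset.univ → w S = 0 := by
    intro S
    induction S using Finset.strongInduction with
    | H S ih =>
      intro hS
      obtain ⟨q₀, -, hq₀⟩ := Finset.exists_of_ssubset (Finset.ssubset_univ_iff.mpr hS)
      have hne : L.filter (· ∉ S) ≠ [] := List.ne_nil_of_mem (a := q₀) (by simp [hLall, hq₀])
      have h0 := fProd_apply_eq_zero hz hne
      rw [map_sum, Finset.sum_eq_single S, ← Module.End.mul_apply, ← fProd_append] at h0
      · have hperm : (L.filter (· ∉ S) ++ L.filter (· ∈ S)).Perm L := by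
          simpa using List.perm_append_comm.trans (List.filter_append_perm (· ∈ S) L)
        obtain ⟨c, hc, h⟩ := fProd_perm hσ hperm
        rw [h, LinearMap.smul_apply] at h0
        exact hinj _ ((smul_eq_zero.mp h0).resolve_left hc)
      · intro T _ hT
        by_cases hTS : T ⊆ S
        · have hTS' : T ⊂ S := Finset.ssubset_iff_subset_ne.mpr ⟨hTS, hT⟩
          rw [ih T hTS' (hTS'.trans_subset (Finset.subset_univ S)).ne, map_zero, map_zero,
            map_zero]
        · obtain ⟨q, hqT, hqS⟩ := Finset.not_subset.mp hTS
          have hdup : ¬ (L.filter (· ∉ S) ++ L.filter (· ∈ T)).Nodup := fun hnd =>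
            (List.nodup_append.mp hnd).2.2 q (by simp [hLall, hqS]) q (by simp [hLall, hqT]) rfl
          rw [← Module.End.mul_apply, ← fProd_append, fProd_eq_zero_of_not_nodup hσ h2 hdup,
            LinearMap.zero_apply]
      · simp
  refine ⟨w Finset.univ, ?_⟩
  rw [Finset.sum_eq_single Finset.univ (fun S _ hS => by rw [hvanish S hS, map_zero, map_zero])
    (by simp)]
  simp

end Top

/-- The preimage `T⁻¹ N` is a `g₀`-submodule of the simple module `M`. -/
lemma apply_mem_of_apply_mem
    (hM : ∀ N : Submodule F M, (∀ X ∈ glGr F m n 0, ∀ w ∈ N, ρ X w ∈ N) → N = ⊥ ∨ N = ⊤)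
    {T : M →ₗ[F] Z} (hT : ∀ X ∈ glGr F m n 0, ∃ c : F, ∀ w, T (ρ X w) = σ X (T w) + c • T w)
    {N : Submodule F Z} (hN : ∀ X ∈ glGr F m n 0, ∀ z ∈ N, σ X z ∈ N)
    {w : M} (hw0 : w ≠ 0) (hw : T w ∈ N) (u : M) : T u ∈ N := by
  have hinv : ∀ X ∈ glGr F m n 0, ∀ w ∈ N.comap T, ρ X w ∈ N.comap T := by
    intro X hX w hw
    obtain ⟨c, hc⟩ := hT X hX
    rw [Submodule.mem_comap, hc]
    exact add_mem (hN X hX _ hw) (N.smul_mem c hw)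
  rcases hM _ hinv with h | h
  · exact absurd ((Submodule.mem_bot F).mp (h ▸ hw : w ∈ (⊥ : Submodule F M))) hw0
  · exact (h ▸ Submodule.mem_top : u ∈ N.comap T)

end Induced

end Rep

end GlSuper

open GlSuper in
theorem graded_babyVerma_simple_of_scalar_ne_zero_general
    {F : Type} [Field F] (p : ℕ) (hp : 3 < p) [CharP F p]
    (m n : ℕ)
    (χ : Matrix (Fin (m + n)) (Fin (m + n)) F →ₗ[F] F)
    -- M: a simple u(g₀,χ)-module, extended to P = g₀ ⊕ g₁ with g₁·M = 0;
    -- ρ records the action (only its restriction to g₀ ⊕ g₁ is constrained)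
    {M : Type} [AddCommGroup M] [Module F M]
    (ρ : Matrix (Fin (m + n)) (Fin (m + n)) F →ₗ[F] Module.End F M)
    (hMsimple : ∀ N : Submodule F M, (∀ X ∈ glGr F m n 0, ∀ w ∈ N, ρ X w ∈ N) →
      N = ⊥ ∨ N = ⊤)
    -- a maximal vector v ∈ M of weight λ
    (v : M) (hvne : v ≠ 0)
    -- Z = Z^χ(M): the induced module u(g,χ) ⊗_{u(g₀⊕g₁,χ)} M, with structure map j,
    -- characterized by the universal property of induction
    {Z : Type} [AddCommGroup Z] [Module F Z]
    (σ : Matrix (Fin (m + n)) (Fin (m + n)) F →ₗ[F] Module.End F Z)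
    (hσbra : ∀ i j : ZMod 2, ∀ X ∈ glGr F m n i, ∀ Y ∈ glGr F m n j,
      σ (glBra F m n X Y) = σ X * σ Y - ((-1 : F) ^ (i.val * j.val)) • (σ Y * σ X))
    (hσchar : ∀ X ∈ glGr F m n 0,
      (σ X) ^ p - σ (X ^ p) = (χ X) ^ p • (1 : Module.End F Z))
    (Zgr : ZMod 2 → Submodule F Z)
    (j : M →ₗ[F] Z) (hjinj : Function.Injective j)
    (hjequiv : ∀ X ∈ glGr F m n 0, ∀ w : M, j (ρ X w) = σ X (j w))
    (hjg1 : ∀ (a : Fin m) (b : Fin n) (w : M),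
      σ (glE F m n (a.castAdd n) (Fin.natAdd m b)) (j w) = 0)
    (huniv : ∀ (W : Type) [AddCommGroup W] [Module F W]
      (τ : Matrix (Fin (m + n)) (Fin (m + n)) F →ₗ[F] Module.End F W),
      (∀ i j' : ZMod 2, ∀ X ∈ glGr F m n i, ∀ Y ∈ glGr F m n j',
        τ (glBra F m n X Y) = τ X * τ Y - ((-1 : F) ^ (i.val * j'.val)) • (τ Y * τ X)) →
      (∀ X ∈ glGr F m n 0,
        (τ X) ^ p - τ (X ^ p) = (χ X) ^ p • (1 : Module.End F W)) →
      ∀ φ : M →ₗ[F] W,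
        (∀ X ∈ glGr F m n 0, ∀ w : M, φ (ρ X w) = τ X (φ w)) →
        (∀ (a : Fin m) (b : Fin n) (w : M),
          τ (glE F m n (a.castAdd n) (Fin.natAdd m b)) (φ w) = 0) →
        ∃! Φ : Z →ₗ[F] W, (∀ X z, Φ (σ X z) = τ X (Φ z)) ∧ Φ ∘ₗ j = φ)
    -- the bases of g₁ and g₋₁ listed in ascending height order
    (L : List (Fin m × Fin n)) (hLnd : L.Nodup) (hLall : ∀ q : Fin m × Fin n, q ∈ L)
    -- the scalar f₁(λ) by which e₁⋯e_l f₁⋯f_l acts on v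
    (f1 : F)
    (hf1 : ((L.map fun q => σ (glE F m n (q.1.castAdd n) (Fin.natAdd m q.2))).prod *
        (L.map fun q => σ (glE F m n (Fin.natAdd m q.2) (q.1.castAdd n))).prod) (j v) =
      f1 • (j v))
    (hf1ne : f1 ≠ 0) :
    -- then Z^χ(M) is simple (as a Z/2-graded u(g,χ)-module)
    ∀ N : Submodule F Z,
      (∀ X : Matrix (Fin (m + n)) (Fin (m + n)) F, ∀ z ∈ N, σ X z ∈ N) →
      N = (N ⊓ Zgr 0) ⊔ (N ⊓ Zgr 1) → N = ⊥ ∨ N = ⊤ := by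
  intro N hN _
  have h2 : (2 : F) ≠ 0 := Ring.two_ne_zero (by rw [ringChar.eq F p]; omega)
  have htop := monomialSpan_eq_top (p := p) huniv hσbra hσchar hjequiv fun q => hjg1 q.1 q.2
  let T := fProd σ L ∘ₗ j
  have hT : ∀ X ∈ glGr F m n 0, ∃ c : F, ∀ w, T (ρ X w) = σ X (T w) + c • T w :=
    fun X hX => exists_fProd_comp_apply_eq hσbra h2 hLall hjequiv hX
  have hf1' : (L.map fun q => σ (eOdd F m n q)).prod (T v) = f1 • j v := hf1
  have hTv : T v ≠ 0 := fun h => hvne (hjinj (by simpa [h, hf1ne] using hf1'.symm))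
  have hTinj : ∀ w, T w = 0 → w = 0 := fun w hw => by
    by_contra hw0
    have h := apply_mem_of_apply_mem hMsimple hT (N := ⊥) (by simp) hw0 (by simpa using hw) v
    exact hTv (by simpa using h)
  rcases eq_or_ne N ⊥ with hbot | hbot
  · exact Or.inl hbot
  obtain ⟨z, hzN, hz⟩ := Submodule.exists_mem_ne_zero_of_ne_bot hbot
  obtain ⟨z', hz'N, hz', hkill⟩ := exists_ne_zero_fOdd_eq_zero hσbra h2 (fun q => hN _) hzN hz
  obtain ⟨w, rfl⟩ := exists_eq_fProd_of_fOdd_eq_zero hσbra h2 hLnd hLall htop hTinj hkill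
  have hTvN : T v ∈ N := apply_mem_of_apply_mem hMsimple hT (fun X _ => hN X)
    (by rintro rfl; simp at hz') hz'N v
  have hjvN : j v ∈ N := by
    rw [← N.smul_mem_iff hf1ne, ← hf1']
    exact list_prod_apply_mem (by simp only [List.mem_map]; rintro _ ⟨q, -, rfl⟩; exact hN _) hTvN
  have hjN : ∀ u, j u ∈ N := apply_mem_of_apply_mem hMsimple
    (fun X hX => ⟨0, by simp [hjequiv X hX]⟩) (fun X _ => hN X) hvne hjvN
  exact Or.inr (IsInduced.eq_top (p := p) huniv hσbra hσchar hN hjN)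

/-- for g = gl(m|n) and a simple u(g₀,χ)-module M (with χ(N₀⁺)=0) with
maximal vector v of weight λ, if the scalar f₁(λ) by which e₁⋯e_l f₁⋯f_l acts on v is
nonzero, then the graded baby Verma module Z^χ(M) = u(g,χ) ⊗_{u(g₀⊕g₁,χ)} M is
simple. -/
theorem graded_babyVerma_simple_of_scalar_ne_zero
    {F : Type} [Field F] [IsAlgClosed F] (p : ℕ) [Fact p.Prime] (hp : 3 < p) [CharP F p]
    (m n : ℕ)
    -- χ ∈ g₀*, vanishing on the odd part and on N₀⁺
    (χ : Matrix (Fin (m + n)) (Fin (m + n)) F →ₗ[F] F)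
    (hχodd : ∀ X ∈ glGr F m n 1, χ X = 0)
    (hχN : ∀ k l : Fin (m + n), k < l → glPar m n k = glPar m n l → χ (glE F m n k l) = 0)
    -- M: a simple u(g₀,χ)-module, extended to P = g₀ ⊕ g₁ with g₁·M = 0;
    -- ρ records the action (only its restriction to g₀ ⊕ g₁ is constrained)
    {M : Type} [AddCommGroup M] [Module F M]
    (ρ : Matrix (Fin (m + n)) (Fin (m + n)) F →ₗ[F] Module.End F M)
    (hρbra : ∀ X ∈ glGr F m n 0, ∀ Y ∈ glGr F m n 0,
      ρ (glBra F m n X Y) = ρ X * ρ Y - ρ Y * ρ X)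
    (hρchar : ∀ X ∈ glGr F m n 0,
      (ρ X) ^ p - ρ (X ^ p) = (χ X) ^ p • (1 : Module.End F M))
    (hρg1 : ∀ (i : Fin m) (j : Fin n), ρ (glE F m n (i.castAdd n) (Fin.natAdd m j)) = 0)
    (hMne : (⊤ : Submodule F M) ≠ ⊥)
    (hMsimple : ∀ N : Submodule F M, (∀ X ∈ glGr F m n 0, ∀ w ∈ N, ρ X w ∈ N) →
      N = ⊥ ∨ N = ⊤)
    -- a maximal vector v ∈ M of weight λ
    (v : M) (hvne : v ≠ 0) (lam : Fin (m + n) → F)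
    (hvh : ∀ k : Fin (m + n), ρ (glE F m n k k) v = lam k • v)
    (hvN : ∀ k l : Fin (m + n), k < l → glPar m n k = glPar m n l → ρ (glE F m n k l) v = 0)
    -- Z = Z^χ(M): the induced module u(g,χ) ⊗_{u(g₀⊕g₁,χ)} M, with structure map j,
    -- characterized by the universal property of induction
    {Z : Type} [AddCommGroup Z] [Module F Z]
    (σ : Matrix (Fin (m + n)) (Fin (m + n)) F →ₗ[F] Module.End F Z)
    (hσbra : ∀ i j : ZMod 2, ∀ X ∈ glGr F m n i, ∀ Y ∈ glGr F m n j,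
      σ (glBra F m n X Y) = σ X * σ Y - ((-1 : F) ^ (i.val * j.val)) • (σ Y * σ X))
    (hσchar : ∀ X ∈ glGr F m n 0,
      (σ X) ^ p - σ (X ^ p) = (χ X) ^ p • (1 : Module.End F Z))
    (Zgr : ZMod 2 → Submodule F Z) (hZg : DirectSum.IsInternal Zgr)
    (hσgr : ∀ i j : ZMod 2, ∀ X ∈ glGr F m n i, ∀ z ∈ Zgr j, σ X z ∈ Zgr (i + j))
    (j : M →ₗ[F] Z) (hjinj : Function.Injective j) (hj0 : ∀ w : M, j w ∈ Zgr 0)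
    (hjequiv : ∀ X ∈ glGr F m n 0, ∀ w : M, j (ρ X w) = σ X (j w))
    (hjg1 : ∀ (a : Fin m) (b : Fin n) (w : M),
      σ (glE F m n (a.castAdd n) (Fin.natAdd m b)) (j w) = 0)
    (huniv : ∀ (W : Type) [AddCommGroup W] [Module F W]
      (τ : Matrix (Fin (m + n)) (Fin (m + n)) F →ₗ[F] Module.End F W),
      (∀ i j' : ZMod 2, ∀ X ∈ glGr F m n i, ∀ Y ∈ glGr F m n j',
        τ (glBra F m n X Y) = τ X * τ Y - ((-1 : F) ^ (i.val * j'.val)) • (τ Y * τ X)) →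
      (∀ X ∈ glGr F m n 0,
        (τ X) ^ p - τ (X ^ p) = (χ X) ^ p • (1 : Module.End F W)) →
      ∀ φ : M →ₗ[F] W,
        (∀ X ∈ glGr F m n 0, ∀ w : M, φ (ρ X w) = τ X (φ w)) →
        (∀ (a : Fin m) (b : Fin n) (w : M),
          τ (glE F m n (a.castAdd n) (Fin.natAdd m b)) (φ w) = 0) →
        ∃! Φ : Z →ₗ[F] W, (∀ X z, Φ (σ X z) = τ X (Φ z)) ∧ Φ ∘ₗ j = φ)
    -- the bases of g₁ and g₋₁ listed in ascending height order
    (L : List (Fin m × Fin n)) (hLnd : L.Nodup) (hLall : ∀ q : Fin m × Fin n, q ∈ L)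
    (hLsort : L.Pairwise fun a b =>
      (m + (a.2 : ℕ)) - (a.1 : ℕ) ≤ (m + (b.2 : ℕ)) - (b.1 : ℕ))
    -- the scalar f₁(λ) by which e₁⋯e_l f₁⋯f_l acts on v
    (f1 : F)
    (hf1 : ((L.map fun q => σ (glE F m n (q.1.castAdd n) (Fin.natAdd m q.2))).prod *
        (L.map fun q => σ (glE F m n (Fin.natAdd m q.2) (q.1.castAdd n))).prod) (j v) =
      f1 • (j v))
    (hf1ne : f1 ≠ 0) :
    -- then Z^χ(M) is simple (as a Z/2-graded u(g,χ)-module)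
    ∀ N : Submodule F Z,
      (∀ X : Matrix (Fin (m + n)) (Fin (m + n)) F, ∀ z ∈ N, σ X z ∈ N) →
      N = (N ⊓ Zgr 0) ⊔ (N ⊓ Zgr 1) → N = ⊥ ∨ N = ⊤ :=
  graded_babyVerma_simple_of_scalar_ne_zero_general p hp m n χ ρ hMsimple v hvne σ hσbra hσchar Zgr
    j hjinj hjequiv hjg1 huniv L hLnd hLall f1 hf1 hf1ne
end
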